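/- arXiv:2302.01270 — 5 statements merged into one kernel-verified Lean document; each statement's English description precedes it below -/
import Mathlib

section
/- Suppose S = [[S11, S12],[S21, S22]] is a block real matrix with ker S11 = {0}, and suppose that for every d1 ∈ coker S11 (i.e., d1ᵀ S11 = 0) the vector (d1, 0) lies in coker S (i.e., d1ᵀ S11 = 0 and d1ᵀ S12 = 0). Let S' = S22 - S21 S11⁺ S12 be the generalized Schur complement. Then the map sending c2 ∈ ker S' to the vector (-S11⁺ S12 c2, c2) is a linear isomorphism from ker S' onto ker S. -/
open Matrix

/-- If `ker S11 = {0}` and every left null vector `d1` of `S11`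
satisfies `d1ᵀ S12 = 0` (so that `(d1, 0)` is in the left null space of the
block matrix `S`), then `c2 ↦ (-S11⁺ S12 c2, c2)` is a linear isomorphism
from `ker S'` onto `ker S`, where `S' = S22 - S21 S11⁺ S12`. -/
theorem stmt1 {m1 m2 n1 n2 : ℕ}
    (S11 : Matrix (Fin m1) (Fin n1) ℝ) (S12 : Matrix (Fin m1) (Fin n2) ℝ)
    (S21 : Matrix (Fin m2) (Fin n1) ℝ) (S22 : Matrix (Fin m2) (Fin n2) ℝ)
    (S11p : Matrix (Fin n1) (Fin m1) ℝ)
    (hp1 : S11 * S11p * S11 = S11)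
    (hp2 : S11p * S11 * S11p = S11p)
    (hp3 : (S11 * S11p)ᵀ = S11 * S11p)
    (hp4 : (S11p * S11)ᵀ = S11p * S11)
    (hker : ∀ c1 : Fin n1 → ℝ, S11 *ᵥ c1 = 0 → c1 = 0)
    (hcoker : ∀ d1 : Fin m1 → ℝ, d1 ᵥ* S11 = 0 → d1 ᵥ* S12 = 0) :
    ∃ e : LinearMap.ker (S22 - S21 * S11p * S12).mulVecLin ≃ₗ[ℝ]
        LinearMap.ker (Matrix.fromBlocks S11 S12 S21 S22).mulVecLin,
      ∀ c2 : LinearMap.ker (S22 - S21 * S11p * S12).mulVecLin,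
        (e c2 : (Fin n1 ⊕ Fin n2) → ℝ) =
          Sum.elim (-((S11p * S12) *ᵥ (c2 : Fin n2 → ℝ))) (c2 : Fin n2 → ℝ) := by
  -- key fact 1: S11p * S11 acts as identity
  have hI : ∀ c : Fin n1 → ℝ, (S11p * S11) *ᵥ c = c := by
    intro c
    have h := hker ((S11p * S11) *ᵥ c - c) ?_
    · exact sub_eq_zero.mp h
    · rw [mulVec_sub, mulVec_mulVec, ← Matrix.mul_assoc, hp1, sub_self]
  -- key fact 2: S11 * S11p * S12 = S12
  have hB : S11 * S11p * S12 = S12 := by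
    have hrow : ∀ d : Fin m1 → ℝ, d ᵥ* (S11 * S11p * S12) = d ᵥ* S12 := by
      intro d
      have h0 : (d ᵥ* (S11 * S11p) - d) ᵥ* S11 = 0 := by
        rw [sub_vecMul, vecMul_vecMul, hp1, sub_self]
      have h1 := hcoker _ h0
      rw [sub_vecMul, sub_eq_zero] at h1
      rw [← vecMul_vecMul]
      exact h1
    ext i j
    have := congrFun (hrow (Pi.single i 1)) j
    simpa using this
  -- membership lemmas
  have hmemf : ∀ c2 : Fin n2 → ℝ, (S22 - S21 * S11p * S12) *ᵥ c2 = 0 →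
      (Matrix.fromBlocks S11 S12 S21 S22) *ᵥ
        (Sum.elim (-((S11p * S12) *ᵥ c2)) c2) = 0 := by
    intro c2 hc2
    rw [fromBlocks_mulVec]
    have e1 : (Sum.elim (-((S11p * S12) *ᵥ c2)) c2 : (Fin n1 ⊕ Fin n2) → ℝ) ∘ Sum.inl
        = -((S11p * S12) *ᵥ c2) := rfl
    have e2 : (Sum.elim (-((S11p * S12) *ᵥ c2)) c2 : (Fin n1 ⊕ Fin n2) → ℝ) ∘ Sum.inr
        = c2 := rfl
    rw [e1, e2]
    have top : S11 *ᵥ -((S11p * S12) *ᵥ c2) + S12 *ᵥ c2 = 0 := by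
      rw [mulVec_neg, mulVec_mulVec, ← Matrix.mul_assoc, hB, neg_add_cancel]
    have bot : S21 *ᵥ -((S11p * S12) *ᵥ c2) + S22 *ᵥ c2 = 0 := by
      have := hc2
      rw [sub_mulVec] at this
      rw [mulVec_neg, mulVec_mulVec, ← Matrix.mul_assoc]
      linear_combination (norm := module) this
    rw [top, bot]
    ext (i | i) <;> simp
  have hrecover : ∀ v : (Fin n1 ⊕ Fin n2) → ℝ,
      (Matrix.fromBlocks S11 S12 S21 S22) *ᵥ v = 0 →
      (v ∘ Sum.inl = -((S11p * S12) *ᵥ (v ∘ Sum.inr)) ∧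
        (S22 - S21 * S11p * S12) *ᵥ (v ∘ Sum.inr) = 0) := by
    intro v hv
    rw [fromBlocks_mulVec] at hv
    have htop : S11 *ᵥ (v ∘ Sum.inl) + S12 *ᵥ (v ∘ Sum.inr) = 0 := by
      funext i; exact congrFun hv (Sum.inl i)
    have hbot : S21 *ᵥ (v ∘ Sum.inl) + S22 *ᵥ (v ∘ Sum.inr) = 0 := by
      funext i; exact congrFun hv (Sum.inr i)
    have h1 : v ∘ Sum.inl = -((S11p * S12) *ᵥ (v ∘ Sum.inr)) := by
      have := hI (v ∘ Sum.inl)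
      rw [← this, ← mulVec_mulVec, ← mulVec_mulVec]
      have hS11 : S11 *ᵥ (v ∘ Sum.inl) = -(S12 *ᵥ (v ∘ Sum.inr)) := by
        linear_combination (norm := module) htop
      rw [hS11, mulVec_neg]
    refine ⟨h1, ?_⟩
    have h1' : (S11p * S12) *ᵥ (v ∘ Sum.inr) = -(v ∘ Sum.inl) := by rw [h1, neg_neg]
    rw [sub_mulVec, Matrix.mul_assoc, ← mulVec_mulVec, h1', mulVec_neg, sub_neg_eq_add]
    linear_combination (norm := module) hbot
  -- forward linear map
  let f : LinearMap.ker (S22 - S21 * S11p * S12).mulVecLin →ₗ[ℝ]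
      LinearMap.ker (Matrix.fromBlocks S11 S12 S21 S22).mulVecLin :=
    { toFun := fun c2 => ⟨Sum.elim (-((S11p * S12) *ᵥ (c2 : Fin n2 → ℝ))) (c2 : Fin n2 → ℝ),
        hmemf _ c2.2⟩
      map_add' := by
        rintro ⟨a, ha⟩ ⟨b, hb⟩
        ext (i | i) <;> simp [mulVec_add] <;> ring
      map_smul' := by
        rintro r ⟨a, ha⟩
        ext (i | i) <;> simp [mulVec_smul] }
  -- backward linear map
  let g : LinearMap.ker (Matrix.fromBlocks S11 S12 S21 S22).mulVecLin →ₗ[ℝ]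
      LinearMap.ker (S22 - S21 * S11p * S12).mulVecLin :=
    { toFun := fun v => ⟨(v : (Fin n1 ⊕ Fin n2) → ℝ) ∘ Sum.inr, (hrecover _ v.2).2⟩
      map_add' := by rintro ⟨a, ha⟩ ⟨b, hb⟩; ext i; simp
      map_smul' := by rintro r ⟨a, ha⟩; ext i; simp }
  refine ⟨LinearEquiv.ofLinear f g ?_ ?_, fun c2 => rfl⟩
  · ext ⟨v, hv⟩ j
    obtain ⟨h1, h2⟩ := hrecover v hv
    cases j with
    | inl i => simpa [f, g] using (congrFun h1 i).symm
    | inr i => simp [f, g]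
  · ext ⟨c2, hc2⟩
    simp [f, g]
end

section
/- Let S = [[S11, S12],[S21, S22]] be a block real matrix with ker S11 = {0} and assume that every d1 with d1ᵀ S11 = 0 also satisfies d1ᵀ S12 = 0. Then for any c2 ∈ ker(S22 - S21 S11⁺ S12), the vector c = (-S11⁺ S12 c2, c2) satisfies S c = 0; in particular (I - S11 S11⁺) S12 c2 = 0. -/
open Matrix

/-! Since `S11 S11⁺ S11 = S11`, every row of `1 - S11 S11⁺` is a left null vector of `S11`,
so by hypothesis it annihilates `S12`: `(1 - S11 S11⁺) S12 = 0`. The two block rows of `S c`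
are then `(1 - S11 S11⁺) S12 c2` and `(S22 - S21 S11⁺ S12) c2`. -/

namespace Matrix

variable {k l m n p R : Type*} [Ring R]

theorem mul_eq_zero_of_forall_vecMul_eq_zero [Fintype m] {A : Matrix l m R} {B : Matrix m n R}
    {C : Matrix m p R} (hBC : ∀ d : m → R, d ᵥ* B = 0 → d ᵥ* C = 0) (hAB : A * B = 0) :
    A * C = 0 := by
  ext i j
  have hrow : A i ᵥ* B = 0 := by
    rw [← mul_apply_eq_vecMul, hAB]
    rfl
  rw [mul_apply_eq_vecMul, hBC _ hrow]
  rfl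

theorem one_sub_mul_mul_eq_zero_of_mul_mul_self [Fintype m] [Fintype n] [DecidableEq m]
    {A : Matrix m n R} {A' : Matrix n m R} {B : Matrix m p R} (hA' : A * A' * A = A)
    (hB : ∀ d : m → R, d ᵥ* A = 0 → d ᵥ* B = 0) : (1 - A * A') * B = 0 :=
  mul_eq_zero_of_forall_vecMul_eq_zero hB <| by rw [Matrix.sub_mul, Matrix.one_mul, hA', sub_self]

theorem fromBlocks_mulVec_sumElim_neg_mulVec [Fintype n] [Fintype p] {A : Matrix m n R}
    {B : Matrix m p R} {C : Matrix k n R} {D : Matrix k p R}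
    (X : Matrix n p R) (y : p → R) :
    fromBlocks A B C D *ᵥ Sum.elim (-(X *ᵥ y)) y =
      Sum.elim ((B - A * X) *ᵥ y) ((D - C * X) *ᵥ y) := by
  simp only [fromBlocks_mulVec, Sum.elim_comp_inl, Sum.elim_comp_inr, mulVec_neg,
    mulVec_mulVec, sub_mulVec]
  congr 1 <;> abel

end Matrix

theorem stmt2_general {m1 m2 n1 n2 : ℕ}
    (S11 : Matrix (Fin m1) (Fin n1) ℝ) (S12 : Matrix (Fin m1) (Fin n2) ℝ)
    (S21 : Matrix (Fin m2) (Fin n1) ℝ) (S22 : Matrix (Fin m2) (Fin n2) ℝ)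
    (S11p : Matrix (Fin n1) (Fin m1) ℝ)
    (hp1 : S11 * S11p * S11 = S11)
    (hcoker : ∀ d1 : Fin m1 → ℝ, d1 ᵥ* S11 = 0 → d1 ᵥ* S12 = 0)
    (c2 : Fin n2 → ℝ) (hc2 : (S22 - S21 * S11p * S12) *ᵥ c2 = 0) :
    (Matrix.fromBlocks S11 S12 S21 S22) *ᵥ
        (Sum.elim (-((S11p * S12) *ᵥ c2)) c2) = 0 ∧
      (1 - S11 * S11p) *ᵥ (S12 *ᵥ c2) = 0 := by
  have hproj : (1 - S11 * S11p) * S12 = 0 :=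
    one_sub_mul_mul_eq_zero_of_mul_mul_self hp1 hcoker
  have hfirst : (1 - S11 * S11p) *ᵥ (S12 *ᵥ c2) = 0 := by
    rw [mulVec_mulVec, hproj, zero_mulVec]
  have hrow : S12 - S11 * S11p * S12 = (1 - S11 * S11p) * S12 := by
    rw [Matrix.sub_mul, Matrix.one_mul]
  refine ⟨?_, hfirst⟩
  rw [fromBlocks_mulVec_sumElim_neg_mulVec, ← Matrix.mul_assoc, ← Matrix.mul_assoc, hc2,
    hrow, hproj, zero_mulVec]
  exact Sum.elim_zero_zero

/-- With `ker S11 = {0}` and every left null vector of `S11`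
annihilating `S12`, for any `c2 ∈ ker (S22 - S21 S11⁺ S12)` the vector
`c = (-S11⁺ S12 c2, c2)` satisfies `S c = 0`; in particular
`(I - S11 S11⁺) S12 c2 = 0`. -/
theorem stmt2 {m1 m2 n1 n2 : ℕ}
    (S11 : Matrix (Fin m1) (Fin n1) ℝ) (S12 : Matrix (Fin m1) (Fin n2) ℝ)
    (S21 : Matrix (Fin m2) (Fin n1) ℝ) (S22 : Matrix (Fin m2) (Fin n2) ℝ)
    (S11p : Matrix (Fin n1) (Fin m1) ℝ)
    (hp1 : S11 * S11p * S11 = S11)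
    (hp2 : S11p * S11 * S11p = S11p)
    (hp3 : (S11 * S11p)ᵀ = S11 * S11p)
    (hp4 : (S11p * S11)ᵀ = S11p * S11)
    (hker : ∀ c1 : Fin n1 → ℝ, S11 *ᵥ c1 = 0 → c1 = 0)
    (hcoker : ∀ d1 : Fin m1 → ℝ, d1 ᵥ* S11 = 0 → d1 ᵥ* S12 = 0)
    (c2 : Fin n2 → ℝ) (hc2 : (S22 - S21 * S11p * S12) *ᵥ c2 = 0) :
    (Matrix.fromBlocks S11 S12 S21 S22) *ᵥ
        (Sum.elim (-((S11p * S12) *ᵥ c2)) c2) = 0 ∧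
      (1 - S11 * S11p) *ᵥ (S12 *ᵥ c2) = 0 :=
  stmt2_general S11 S12 S21 S22 S11p hp1 hcoker c2 hc2
end

section
/- Let Γ = (V, E) be a finite set of species V and reactions E with stoichiometric matrix S ∈ ℝ^{V×E}. For a subnetwork γ = (V_γ, E_γ) with V_γ ⊆ V and E_γ ⊆ E, define the flux influence index λ_f(γ) = -|V_γ| + |E_γ| + dim(P⁰_γ(coker S)), where P⁰_γ is the coordinate projection onto V_γ. Then λ_f is submodular: λ_f(γ1) + λ_f(γ2) ≥ λ_f(γ1 ∩ γ2) + λ_f(γ1 ∪ γ2), where intersection and union of subnetworks are taken componentwise. -/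
open Matrix

/-- Coordinate projection onto the coordinates in `γ`. -/
noncomputable def coordProj (V : Type*) [Fintype V] [DecidableEq V]
    (γ : Finset V) : (V → ℝ) →ₗ[ℝ] (V → ℝ) where
  toFun d := fun v => if v ∈ γ then d v else 0
  map_add' d₁ d₂ := by ext v; by_cases h : v ∈ γ <;> simp [h]
  map_smul' a d := by ext v; by_cases h : v ∈ γ <;> simp [h]

/-- The cokernel (left null space) of `S`: `{d : dᵀ S = 0}`. -/
noncomputable def cokerMat {V E : Type*} [Fintype V] [Fintype E]
    (S : Matrix V E ℝ) : Submodule ℝ (V → ℝ) :=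
  LinearMap.ker (Sᵀ).mulVecLin

/-- The flux influence index `λ_f(γ) = -|V_γ| + |E_γ| + dim (P⁰_γ (coker S))`. -/
noncomputable def fluxIndex {V E : Type*} [Fintype V] [Fintype E] [DecidableEq V]
    (S : Matrix V E ℝ) (γ : Finset V × Finset E) : ℤ :=
  -(γ.1.card : ℤ) + (γ.2.card : ℤ) +
    (Module.finrank ℝ ((cokerMat S).map (coordProj V γ.1)) : ℤ)

open LinearMap Module

/-- By rank–nullity on `D` this is the reverse inequality for the kernels `Kh` of the
restrictions to `D`, which follows from `Kf ⊔ Kg ≤ Kp`, `Kf ⊓ Kg ≤ Kq` and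
`dim (Kf ⊔ Kg) + dim (Kf ⊓ Kg) = dim Kf + dim Kg`. -/
theorem Submodule.finrank_map_add_finrank_map_le {K M N : Type*} [DivisionRing K]
    [AddCommGroup M] [Module K M] [FiniteDimensional K M] [AddCommGroup N] [Module K N]
    (D : Submodule K M) {f g p q : M →ₗ[K] N} (hfp : ker f ≤ ker p) (hgp : ker g ≤ ker p)
    (hfgq : ker f ⊓ ker g ≤ ker q) :
    finrank K (D.map p) + finrank K (D.map q) ≤ finrank K (D.map f) + finrank K (D.map g) := by
  have rank_nullity (h : M →ₗ[K] N) :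
      finrank K (D.map h) + finrank K (ker (h.domRestrict D)) = finrank K D := by
    rw [← range_domRestrict]
    exact finrank_range_add_finrank_ker _
  have ker_domRestrict_mono {h h' : M →ₗ[K] N} (hh' : ker h ≤ ker h') :
      ker (h.domRestrict D) ≤ ker (h'.domRestrict D) := by
    rw [ker_domRestrict, ker_domRestrict]
    exact Submodule.comap_mono hh'
  have hsup := Submodule.finrank_mono
    (sup_le (ker_domRestrict_mono hfp) (ker_domRestrict_mono hgp))
  have hinf : ker (f.domRestrict D) ⊓ ker (g.domRestrict D) ≤ ker (q.domRestrict D) := by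
    simpa only [ker_domRestrict, ← Submodule.comap_inf] using Submodule.comap_mono hfgq
  have hmodular := Submodule.finrank_sup_add_finrank_inf_eq
    (ker (f.domRestrict D)) (ker (g.domRestrict D))
  have hinf_dim := Submodule.finrank_mono hinf
  have := rank_nullity f; have := rank_nullity g; have := rank_nullity p; have := rank_nullity q
  omega

section coordProj

variable {V : Type*} [Fintype V] [DecidableEq V]

theorem mem_ker_coordProj {γ : Finset V} {d : V → ℝ} :
    d ∈ ker (coordProj V γ) ↔ ∀ v ∈ γ, d v = 0 := by
  simp only [mem_ker, funext_iff, coordProj, coe_mk, AddHom.coe_mk, Pi.zero_apply, ite_eq_right_iff]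

theorem ker_coordProj_anti {a b : Finset V} (hab : a ⊆ b) :
    ker (coordProj V b) ≤ ker (coordProj V a) := fun _ hd ↦
  mem_ker_coordProj.2 fun v hv ↦ mem_ker_coordProj.1 hd v (hab hv)

theorem ker_coordProj_inf_le_union (a b : Finset V) :
    ker (coordProj V a) ⊓ ker (coordProj V b) ≤ ker (coordProj V (a ∪ b)) := by
  rintro d ⟨hda, hdb⟩
  refine mem_ker_coordProj.2 fun v hv ↦ ?_
  rcases Finset.mem_union.1 hv with hv | hv
  exacts [mem_ker_coordProj.1 hda v hv, mem_ker_coordProj.1 hdb v hv]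

theorem finrank_map_coordProj_submodular (D : Submodule ℝ (V → ℝ)) (a b : Finset V) :
    finrank ℝ (D.map (coordProj V (a ∩ b))) + finrank ℝ (D.map (coordProj V (a ∪ b))) ≤
      finrank ℝ (D.map (coordProj V a)) + finrank ℝ (D.map (coordProj V b)) :=
  D.finrank_map_add_finrank_map_le (ker_coordProj_anti Finset.inter_subset_left)
    (ker_coordProj_anti Finset.inter_subset_right) (ker_coordProj_inf_le_union a b)

end coordProj

/-- The flux influence index is submodular, intersection and
union of subnetworks being taken componentwise. -/
theorem stmt5 {V E : Type*} [Fintype V] [Fintype E] [DecidableEq V] [DecidableEq E]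
    (S : Matrix V E ℝ) (γ1 γ2 : Finset V × Finset E) :
    fluxIndex S (γ1.1 ∩ γ2.1, γ1.2 ∩ γ2.2) +
      fluxIndex S (γ1.1 ∪ γ2.1, γ1.2 ∪ γ2.2) ≤
    fluxIndex S γ1 + fluxIndex S γ2 := by
  have hV := Finset.card_inter_add_card_union γ1.1 γ2.1
  have hE := Finset.card_inter_add_card_union γ1.2 γ2.2
  have hdim := finrank_map_coordProj_submodular (cokerMat S) γ1.1 γ2.1
  simp only [fluxIndex]
  omega
end

section
/- Let S be a block matrix [[S11, S12],[S21, S22]] with ker S11 ⊆ ker S21. Then the diagram of linear maps ψ1(c1) = (c1, 0), φ1(c1,c2) = c2, ψ0(d1) = (d1, S21 S11⁺ d1), φ0(d1,d2) = d2 - S21 S11⁺ d1, together with boundary maps given by multiplication by S11, S, and S' = S22 - S21 S11⁺ S12, commutes: S ψ1(c1) = ψ0(S11 c1) for all c1, and φ0(S c) = S' φ1(c) for all c = (c1, c2). -/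
/-!
Since `S11 S11⁺ S11 = S11`, every column of `S11⁺ S11 - 1` lies in `ker S11 ⊆ ker S21`, so
`S21 S11⁺ S11 = S21`. With this identity both squares commute by expanding the block product:
the lower block of `S (c1, 0)` is `S21 c1 = S21 S11⁺ (S11 c1)`, and in `φ0 (S c)` the `c1`-terms
cancel, leaving the Schur complement `S22 - S21 S11⁺ S12` applied to `c2`.
-/

open Matrix

namespace Matrix

variable {R : Type*} [Ring R] {l m n p q : Type*} [Fintype m] [Fintype n] [Fintype q]

theorem mul_mul_eq_of_ker_le {A : Matrix m n R} {B : Matrix n m R}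
    {C : Matrix l n R} (hABA : A * B * A = A) (hker : ∀ v, A *ᵥ v = 0 → C *ᵥ v = 0) :
    C * B * A = C := by
  refine ext_iff_mulVec.mpr fun v => ?_
  have hA : A *ᵥ ((B * A) *ᵥ v - v) = 0 := by
    rw [mulVec_sub, mulVec_mulVec, ← Matrix.mul_assoc, hABA, sub_self]
  have hC := hker _ hA
  rwa [mulVec_sub, mulVec_mulVec, sub_eq_zero, ← Matrix.mul_assoc] at hC

theorem fromBlocks_mulVec_inl_eq {A : Matrix m n R} {B : Matrix m q R} {C : Matrix p n R}
    {D : Matrix p q R} {P : Matrix n m R} (hCPA : C * P * A = C) (v : n → R) :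
    fromBlocks A B C D *ᵥ Sum.elim v 0 = Sum.elim (A *ᵥ v) ((C * P) *ᵥ (A *ᵥ v)) := by
  rw [fromBlocks_mulVec, mulVec_mulVec, hCPA]
  simp only [Sum.elim_comp_inl, Sum.elim_comp_inr, mulVec_zero, add_zero]

theorem fromBlocks_mulVec_inr_sub_eq_schur {A : Matrix m n R} {B : Matrix m q R}
    {C : Matrix p n R} {D : Matrix p q R} {P : Matrix n m R} (hCPA : C * P * A = C)
    (v : n → R) (w : q → R) :
    (fromBlocks A B C D *ᵥ Sum.elim v w) ∘ Sum.inr -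
        (C * P) *ᵥ ((fromBlocks A B C D *ᵥ Sum.elim v w) ∘ Sum.inl) =
      (D - C * P * B) *ᵥ w := by
  rw [fromBlocks_mulVec]
  simp only [Sum.elim_comp_inl, Sum.elim_comp_inr]
  rw [mulVec_add, mulVec_mulVec, mulVec_mulVec, hCPA, sub_mulVec]
  abel

end Matrix

theorem stmt18_general {m1 m2 n1 n2 : ℕ}
    (S11 : Matrix (Fin m1) (Fin n1) ℝ) (S12 : Matrix (Fin m1) (Fin n2) ℝ)
    (S21 : Matrix (Fin m2) (Fin n1) ℝ) (S22 : Matrix (Fin m2) (Fin n2) ℝ)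
    (S11p : Matrix (Fin n1) (Fin m1) ℝ)
    (hp1 : S11 * S11p * S11 = S11)
    (hker : ∀ c1 : Fin n1 → ℝ, S11 *ᵥ c1 = 0 → S21 *ᵥ c1 = 0) :
    (∀ c1 : Fin n1 → ℝ,
      (Matrix.fromBlocks S11 S12 S21 S22) *ᵥ (Sum.elim c1 0) =
        Sum.elim (S11 *ᵥ c1) ((S21 * S11p) *ᵥ (S11 *ᵥ c1))) ∧
    (∀ c1 : Fin n1 → ℝ, ∀ c2 : Fin n2 → ℝ,
      (((Matrix.fromBlocks S11 S12 S21 S22) *ᵥ (Sum.elim c1 c2)) ∘ Sum.inr) -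
          (S21 * S11p) *ᵥ
            (((Matrix.fromBlocks S11 S12 S21 S22) *ᵥ (Sum.elim c1 c2)) ∘ Sum.inl) =
        (S22 - S21 * S11p * S12) *ᵥ c2) := by
  have hkey : S21 * S11p * S11 = S21 := mul_mul_eq_of_ker_le hp1 hker
  exact ⟨fromBlocks_mulVec_inl_eq hkey, fromBlocks_mulVec_inr_sub_eq_schur hkey⟩

/-- With `ker S11 ⊆ ker S21`, the diagram of chain maps
`ψ1(c1) = (c1, 0)`, `φ1(c1,c2) = c2`, `ψ0(d1) = (d1, S21 S11⁺ d1)`,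
`φ0(d1,d2) = d2 - S21 S11⁺ d1`, with boundary maps given by multiplication
by `S11`, `S` and `S' = S22 - S21 S11⁺ S12`, commutes:
`S ψ1(c1) = ψ0(S11 c1)` for all `c1`, and `φ0(S c) = S' φ1(c)` for all
`c = (c1, c2)`. -/
theorem stmt18 {m1 m2 n1 n2 : ℕ}
    (S11 : Matrix (Fin m1) (Fin n1) ℝ) (S12 : Matrix (Fin m1) (Fin n2) ℝ)
    (S21 : Matrix (Fin m2) (Fin n1) ℝ) (S22 : Matrix (Fin m2) (Fin n2) ℝ)
    (S11p : Matrix (Fin n1) (Fin m1) ℝ)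
    (hp1 : S11 * S11p * S11 = S11)
    (hp2 : S11p * S11 * S11p = S11p)
    (hp3 : (S11 * S11p)ᵀ = S11 * S11p)
    (hp4 : (S11p * S11)ᵀ = S11p * S11)
    (hker : ∀ c1 : Fin n1 → ℝ, S11 *ᵥ c1 = 0 → S21 *ᵥ c1 = 0) :
    (∀ c1 : Fin n1 → ℝ,
      (Matrix.fromBlocks S11 S12 S21 S22) *ᵥ (Sum.elim c1 0) =
        Sum.elim (S11 *ᵥ c1) ((S21 * S11p) *ᵥ (S11 *ᵥ c1))) ∧
    (∀ c1 : Fin n1 → ℝ, ∀ c2 : Fin n2 → ℝ,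
      (((Matrix.fromBlocks S11 S12 S21 S22) *ᵥ (Sum.elim c1 c2)) ∘ Sum.inr) -
          (S21 * S11p) *ᵥ
            (((Matrix.fromBlocks S11 S12 S21 S22) *ᵥ (Sum.elim c1 c2)) ∘ Sum.inl) =
        (S22 - S21 * S11p * S12) *ᵥ c2) :=
  stmt18_general S11 S12 S21 S22 S11p hp1 hker
end

section
/- Let S be a block matrix [[S11, S12],[S21, S22]] with ker S11 ⊆ ker S21 and S' = S22 - S21 S11⁺ S12. The sequence 0 → ker S11 → ker S → ker S' is exact, where the first map sends c1 to (c1, 0) and the second sends (c1, c2) to c2: the first map is injective with image exactly the set of elements of ker S mapped to 0 by the second. -/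
/-!
If `S₁₁ S₁₁⁺ S₁₁ = S₁₁` and `ker S₁₁ ⊆ ker S₂₁`, then `S₂₁ S₁₁⁺ S₁₁ = S₂₁`, since
`S₁₁⁺ S₁₁ v - v ∈ ker S₁₁` for every `v`. So for `(c₁, c₂) ∈ ker S` the first block row
gives `S₁₂ c₂ = -S₁₁ c₁`, whence `S₂₁ S₁₁⁺ S₁₂ c₂ = -S₂₁ c₁ = S₂₂ c₂` by the second row.
-/

namespace Matrix

variable {R : Type*} [Ring R] {l m n o : Type*} [Fintype l] [Fintype m]

theorem fromBlocks_mulVec_eq_zero_iff (A : Matrix n l R) (B : Matrix n m R)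
    (C : Matrix o l R) (D : Matrix o m R) (x : l ⊕ m → R) :
    fromBlocks A B C D *ᵥ x = 0 ↔
      A *ᵥ (x ∘ Sum.inl) + B *ᵥ (x ∘ Sum.inr) = 0 ∧
        C *ᵥ (x ∘ Sum.inl) + D *ᵥ (x ∘ Sum.inr) = 0 := by
  rw [fromBlocks_mulVec, ← Sum.elim_zero_zero, Sum.elim_eq_iff]

theorem fromBlocks_mulVec_elim_zero_eq_zero {A : Matrix n l R} {C : Matrix o l R}
    (B : Matrix n m R) (D : Matrix o m R) {x : l → R} (hA : A *ᵥ x = 0) (hC : C *ᵥ x = 0) :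
    fromBlocks A B C D *ᵥ Sum.elim x 0 = 0 := by
  simp [fromBlocks_mulVec_eq_zero_iff, hA, hC]

theorem mul_mul_eq_of_mul_mul_self_of_ker_le [Fintype n] {A : Matrix n l R} {G : Matrix l n R}
    {C : Matrix o l R} (hG : A * G * A = A) (hker : ∀ v, A *ᵥ v = 0 → C *ᵥ v = 0) :
    C * G * A = C := by
  refine ext_iff_mulVec.mpr fun v => ?_
  have hv : A *ᵥ (G *ᵥ A *ᵥ v - v) = 0 := by
    rw [mulVec_sub, mulVec_mulVec, mulVec_mulVec, hG, sub_self]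
  simpa [mulVec_sub, mulVec_mulVec, Matrix.mul_assoc, sub_eq_zero] using hker _ hv

theorem schurComplement_mulVec_eq_zero [Fintype n] {A : Matrix n l R} {B : Matrix n m R}
    {C : Matrix o l R} {D : Matrix o m R} {G : Matrix l n R} (hCGA : C * G * A = C)
    {x : l ⊕ m → R} (hx : fromBlocks A B C D *ᵥ x = 0) :
    (D - C * G * B) *ᵥ (x ∘ Sum.inr) = 0 := by
  obtain ⟨hrow₁, hrow₂⟩ := (fromBlocks_mulVec_eq_zero_iff A B C D x).mp hx
  have hB : B *ᵥ (x ∘ Sum.inr) = -(A *ᵥ (x ∘ Sum.inl)) := eq_neg_of_add_eq_zero_right hrow₁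
  calc (D - C * G * B) *ᵥ (x ∘ Sum.inr)
      = D *ᵥ (x ∘ Sum.inr) - (C * G) *ᵥ (B *ᵥ (x ∘ Sum.inr)) := by
        rw [sub_mulVec, mulVec_mulVec]
    _ = C *ᵥ (x ∘ Sum.inl) + D *ᵥ (x ∘ Sum.inr) := by
        rw [hB, mulVec_neg, mulVec_mulVec, hCGA, sub_neg_eq_add, add_comm]
    _ = 0 := hrow₂

theorem comp_inr_eq_zero_iff_of_fromBlocks_mulVec_eq_zero {A : Matrix n l R}
    {B : Matrix n m R} {C : Matrix o l R} {D : Matrix o m R} {x : l ⊕ m → R}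
    (hx : fromBlocks A B C D *ᵥ x = 0) :
    x ∘ Sum.inr = 0 ↔ ∃ x₁ : l → R, A *ᵥ x₁ = 0 ∧ x = Sum.elim x₁ 0 := by
  constructor
  · intro hx₂
    refine ⟨x ∘ Sum.inl, ?_, by rw [← hx₂, Sum.elim_comp_inl_inr]⟩
    simpa [hx₂] using ((fromBlocks_mulVec_eq_zero_iff A B C D x).mp hx).1
  · rintro ⟨x₁, -, rfl⟩
    rfl

end Matrix

open Matrix

theorem stmt19_general {m1 m2 n1 n2 : ℕ}
    (S11 : Matrix (Fin m1) (Fin n1) ℝ) (S12 : Matrix (Fin m1) (Fin n2) ℝ)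
    (S21 : Matrix (Fin m2) (Fin n1) ℝ) (S22 : Matrix (Fin m2) (Fin n2) ℝ)
    (S11p : Matrix (Fin n1) (Fin m1) ℝ)
    (hp1 : S11 * S11p * S11 = S11)
    (hker : ∀ c1 : Fin n1 → ℝ, S11 *ᵥ c1 = 0 → S21 *ᵥ c1 = 0) :
    (∀ c1 : Fin n1 → ℝ, S11 *ᵥ c1 = 0 →
      (Matrix.fromBlocks S11 S12 S21 S22) *ᵥ (Sum.elim c1 0) = 0) ∧
    (Function.Injective fun c1 : Fin n1 → ℝ =>
      (Sum.elim c1 0 : (Fin n1 ⊕ Fin n2) → ℝ)) ∧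
    (∀ c : (Fin n1 ⊕ Fin n2) → ℝ, (Matrix.fromBlocks S11 S12 S21 S22) *ᵥ c = 0 →
      (S22 - S21 * S11p * S12) *ᵥ (c ∘ Sum.inr) = 0) ∧
    (∀ c : (Fin n1 ⊕ Fin n2) → ℝ, (Matrix.fromBlocks S11 S12 S21 S22) *ᵥ c = 0 →
      ((c ∘ Sum.inr = 0) ↔
        ∃ c1 : Fin n1 → ℝ, S11 *ᵥ c1 = 0 ∧ c = Sum.elim c1 0)) :=
  ⟨fun _ h₁₁ => fromBlocks_mulVec_elim_zero_eq_zero S12 S22 h₁₁ (hker _ h₁₁),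
    fun _ _ h => by simpa using congrArg (· ∘ Sum.inl) h,
    fun _ => schurComplement_mulVec_eq_zero (mul_mul_eq_of_mul_mul_self_of_ker_le hp1 hker),
    fun _ => comp_inr_eq_zero_iff_of_fromBlocks_mulVec_eq_zero⟩

/-- With `ker S11 ⊆ ker S21` and `S' = S22 - S21 S11⁺ S12`,
the sequence `0 → ker S11 → ker S → ker S'` is exact: `c1 ↦ (c1, 0)` maps
`ker S11` into `ker S` injectively, `(c1,c2) ↦ c2` maps `ker S` into
`ker S'`, and the image of the first map is exactly the kernel of the
second restricted to `ker S`. -/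
theorem stmt19 {m1 m2 n1 n2 : ℕ}
    (S11 : Matrix (Fin m1) (Fin n1) ℝ) (S12 : Matrix (Fin m1) (Fin n2) ℝ)
    (S21 : Matrix (Fin m2) (Fin n1) ℝ) (S22 : Matrix (Fin m2) (Fin n2) ℝ)
    (S11p : Matrix (Fin n1) (Fin m1) ℝ)
    (hp1 : S11 * S11p * S11 = S11)
    (hp2 : S11p * S11 * S11p = S11p)
    (hp3 : (S11 * S11p)ᵀ = S11 * S11p)
    (hp4 : (S11p * S11)ᵀ = S11p * S11)
    (hker : ∀ c1 : Fin n1 → ℝ, S11 *ᵥ c1 = 0 → S21 *ᵥ c1 = 0) :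
    (∀ c1 : Fin n1 → ℝ, S11 *ᵥ c1 = 0 →
      (Matrix.fromBlocks S11 S12 S21 S22) *ᵥ (Sum.elim c1 0) = 0) ∧
    (Function.Injective fun c1 : Fin n1 → ℝ =>
      (Sum.elim c1 0 : (Fin n1 ⊕ Fin n2) → ℝ)) ∧
    (∀ c : (Fin n1 ⊕ Fin n2) → ℝ, (Matrix.fromBlocks S11 S12 S21 S22) *ᵥ c = 0 →
      (S22 - S21 * S11p * S12) *ᵥ (c ∘ Sum.inr) = 0) ∧
    (∀ c : (Fin n1 ⊕ Fin n2) → ℝ, (Matrix.fromBlocks S11 S12 S21 S22) *ᵥ c = 0 →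
      ((c ∘ Sum.inr = 0) ↔
        ∃ c1 : Fin n1 → ℝ, S11 *ᵥ c1 = 0 ∧ c = Sum.elim c1 0)) :=
  stmt19_general S11 S12 S21 S22 S11p hp1 hker
end
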